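/- arXiv:2001.10986 — 2 statements merged into one kernel-verified Lean document; each statement's English description precedes it below -/
import Mathlib

section
/- Any scaling factors (u*, v*) with π* = (u*⊗v*)·K, where π* is the unique minimizer of KL(·|K) over Π(μ̂,ν̂), satisfy: u* ∈ L^∞₊(X,μ), v* ∈ L^∞₊(Y,ν), ‖u*‖_{L¹(X,μ)} > 0, ‖v*‖_{L¹(Y,ν)} > 0; for μ-a.e. x ∈ X, (1/‖v*‖_{L¹(Y,ν)})·dμ̂/dμ(x) ≤ u*(x) ≤ (exp(‖c‖_∞/ε)/‖v*‖_{L¹(Y,ν)})·dμ̂/dμ(x); for ν-a.e. y ∈ Y, (1/‖u*‖_{L¹(X,μ)})·dν̂/dν(y) ≤ v*(y) ≤ (exp(‖c‖_∞/ε)/‖u*‖_{L¹(X,μ)})·dν̂/dν(y); and log u* ∈ L¹(X,μ̂), log v* ∈ L¹(Y,ν̂). -/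
open MeasureTheory ENNReal Filter Topology

noncomputable section

/-- `phi s = s * log s - s + 1` (note `phi 0 = 1` since `Real.log 0 = 0`);
this is the integrand of the Kullback--Leibler divergence. -/
def phi (s : ℝ) : ℝ := s * Real.log s - s + 1

open Classical in
/-- Kullback--Leibler divergence `KL(ρ|σ) ∈ [0,∞]`: `∫ phi (dρ/dσ) dσ` if `ρ ≪ σ`,
and `∞` otherwise (nonnegativity of `ρ` is automatic for measures). -/
def KL {Z : Type*} [MeasurableSpace Z] (ρ σ : Measure Z) : ℝ≥0∞ :=
  if ρ ≪ σ then ∫⁻ z, ENNReal.ofReal (phi ((ρ.rnDeriv σ) z).toReal) ∂σ else ⊤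

/-- The set `Π(μh, νh)` of transport plans with marginals `μh` and `νh`. -/
def Coupling {X Y : Type*} [MeasurableSpace X] [MeasurableSpace Y]
    (μh : Measure X) (νh : Measure Y) : Set (Measure (X × Y)) :=
  {π | π.map Prod.fst = μh ∧ π.map Prod.snd = νh}

/-- The Gibbs kernel measure `K = exp(-c/ε) ⋅ (μ ⊗ ν)`. -/
def Kmeas {X Y : Type*} [MeasurableSpace X] [MeasurableSpace Y]
    (μ : Measure X) (ν : Measure Y) [SFinite ν] (c : X × Y → ℝ) (ε : ℝ) : Measure (X × Y) :=
  (μ.prod ν).withDensity fun p => ENNReal.ofReal (Real.exp (-c p / ε))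

/-- The product density `(u ⊗ v)(x,y) = u x * v y`, as an `ℝ≥0∞`-valued density. -/
def prodDensity {X Y : Type*} (u : X → ℝ) (v : Y → ℝ) : X × Y → ℝ≥0∞ :=
  fun p => ENNReal.ofReal (u p.1 * v p.2)

/-- `L^∞₊(μ)`: measurable, a.e. nonnegative, essentially bounded functions. -/
def LinftyPlus {Z : Type*} [MeasurableSpace Z] (μ : Measure Z) (u : Z → ℝ) : Prop :=
  Measurable u ∧ (∀ᵐ z ∂μ, 0 ≤ u z) ∧ ∃ C : ℝ, ∀ᵐ z ∂μ, u z ≤ C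

/-!
With `k = exp (-c / ε)`, the first marginal of `(u ⊗ v) • K` has `μ`-density
`u x * ∫ k (x, y) v y dν`, and since `exp (-cmax / ε) ≤ k ≤ 1` this integral lies between
`exp (-cmax / ε) * ‖v‖₁` and `‖v‖₁`. Thus `dμ̂/dμ` is pinched between two multiples of `u`,
which is the sandwich bound. `‖v‖₁` is positive because `μ̂ ≠ 0`, and finite because `dμ̂/dμ` is
bounded (otherwise the density would only take the values `0` and `∞`). Where `dμ̂/dμ > 0`,
`log u` differs from `log (dμ̂/dμ)` by a bounded amount, so `∫ |log u| dμ̂` is controlled by a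
bound for `t |log t|` on the range of the density. The factor `v` is handled symmetrically.
-/

lemma abs_log_le_of_mul_le_of_le_mul {α β t s : ℝ} (hα : 0 < α) (ht : 0 < t)
    (hlo : α * t ≤ s) (hhi : s ≤ β * t) :
    |Real.log s| ≤ |Real.log t| + (|Real.log α| + |Real.log β|) := by
  have hs : 0 < s := (mul_pos hα ht).trans_le hlo
  have hβ : 0 < β := pos_of_mul_pos_left (hs.trans_le hhi) ht.le
  have hlog_lo := Real.log_le_log (mul_pos hα ht) hlo
  have hlog_hi := Real.log_le_log hs hhi
  rw [Real.log_mul hα.ne' ht.ne'] at hlog_lo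
  rw [Real.log_mul hβ.ne' ht.ne'] at hlog_hi
  rw [abs_le]
  constructor <;> linarith [neg_abs_le (Real.log t), le_abs_self (Real.log t),
    neg_abs_le (Real.log α), le_abs_self (Real.log β), abs_nonneg (Real.log α),
    abs_nonneg (Real.log β)]

lemma div_mul_le_and_le_inv_div_mul_of_eq_mul {f s i J a : ℝ} (hs : 0 ≤ s) (hJ : 0 < J)
    (ha : 0 < a) (hlo : a * J ≤ i) (hhi : i ≤ J) (hf : f = s * i) :
    1 / J * f ≤ s ∧ s ≤ a⁻¹ / J * f := by
  subst hf
  constructor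
  · rw [one_div, inv_mul_le_iff₀ hJ]
    nlinarith [mul_le_mul_of_nonneg_left hhi hs]
  · rw [show a⁻¹ / J * (s * i) = s * i / (a * J) by field_simp, le_div_iff₀ (mul_pos ha hJ)]
    exact mul_le_mul_of_nonneg_left hlo hs

section

variable {X Y : Type*} [MeasurableSpace X] [MeasurableSpace Y] {μ : Measure X} {ν : Measure Y}
  {cmax ε : ℝ}

lemma integrable_log_withDensity [IsFiniteMeasure μ] {f : X → ℝ≥0∞} (hf : Measurable f)
    {C : ℝ≥0∞} (hC : C ≠ ⊤) (hfC : ∀ᵐ x ∂μ, f x ≤ C) {s : X → ℝ} (hs : Measurable s)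
    {α β : ℝ} (hα : 0 < α)
    (hbounds : ∀ᵐ x ∂μ, α * (f x).toReal ≤ s x ∧ s x ≤ β * (f x).toReal) :
    Integrable (fun x => Real.log (s x)) (μ.withDensity f) := by
  rw [integrable_withDensity_iff hf (hfC.mono fun x hx => hx.trans_lt hC.lt_top)]
  obtain ⟨M, hM⟩ := isCompact_Icc.exists_bound_of_continuousOn
    (Real.continuous_mul_log.continuousOn (s := Set.Icc 0 C.toReal))
  set D := |Real.log α| + |Real.log β|
  refine (integrable_const (M + D * C.toReal)).mono'
    ((Real.measurable_log.comp hs).mul hf.ennreal_toReal).aestronglyMeasurable ?_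
  filter_upwards [hfC, hbounds] with x hxC ⟨hlo, hhi⟩
  have htC : (f x).toReal ≤ C.toReal := ENNReal.toReal_mono hC hxC
  have ht0 : 0 ≤ (f x).toReal := ENNReal.toReal_nonneg
  generalize (f x).toReal = t at hlo hhi htC ht0 ⊢
  have hMt := hM t ⟨ht0, htC⟩
  have hD : 0 ≤ D := by positivity
  rcases ht0.eq_or_lt with rfl | ht
  · simp only [zero_mul, norm_zero, mul_zero] at hMt ⊢
    positivity
  · calc ‖Real.log (s x) * t‖ = |Real.log (s x)| * t := by
          rw [Real.norm_eq_abs, abs_mul, abs_of_pos ht]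
      _ ≤ (|Real.log t| + D) * t := by
          gcongr
          exact abs_log_le_of_mul_le_of_le_mul hα ht hlo hhi
      _ = ‖t * Real.log t‖ + D * t := by
          rw [Real.norm_eq_abs, abs_mul, abs_of_pos ht]
          ring
      _ ≤ M + D * C.toReal := by gcongr

lemma ne_zero_and_ne_top_of_withDensity_mul {U I : X → ℝ≥0∞} {J m C : ℝ≥0∞} (hm : m ≠ 0)
    (hI : ∀ x, m * J ≤ I x ∧ I x ≤ J) (hC : C ≠ ⊤) (hUI : ∀ᵐ x ∂μ, U x * I x ≤ C)
    (hne : μ.withDensity (fun x => U x * I x) ≠ 0) : J ≠ 0 ∧ J ≠ ⊤ := by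
  have hzero (h : ∀ᵐ x ∂μ, U x * I x = 0) : μ.withDensity (fun x => U x * I x) = 0 := by
    rw [withDensity_congr_ae (g := 0) h, withDensity_zero]
  refine ⟨fun hJ => hne (hzero (.of_forall fun x => ?_)), fun hJ => hne (hzero ?_)⟩
  · rw [le_antisymm ((hI x).2.trans hJ.le) bot_le, mul_zero]
  · filter_upwards [hUI] with x hx
    have hIx : I x = ⊤ := top_le_iff.mp (by simpa [hJ, ENNReal.mul_top hm] using (hI x).1)
    rw [hIx] at hx ⊢
    by_contra hU
    exact hC (top_le_iff.mp (by rwa [ENNReal.mul_top (left_ne_zero_of_mul hU)] at hx))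

lemma lintegral_exp_neg_div_mul_mem {c : Y → ℝ} (hc0 : ∀ y, 0 ≤ c y) (hcmax : ∀ y, c y ≤ cmax)
    (hε : 0 < ε) (w : Y → ℝ≥0∞) :
    ENNReal.ofReal (Real.exp (-cmax / ε)) * ∫⁻ y, w y ∂ν ≤
        ∫⁻ y, ENNReal.ofReal (Real.exp (-c y / ε)) * w y ∂ν ∧
      ∫⁻ y, ENNReal.ofReal (Real.exp (-c y / ε)) * w y ∂ν ≤ ∫⁻ y, w y ∂ν := by
  have hk (y : Y) : Real.exp (-cmax / ε) ≤ Real.exp (-c y / ε) ∧ Real.exp (-c y / ε) ≤ 1 :=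
    ⟨Real.exp_le_exp.2 (div_le_div_of_nonneg_right (neg_le_neg (hcmax y)) hε.le),
      Real.exp_le_one_iff.2 (div_nonpos_of_nonpos_of_nonneg (neg_nonpos.2 (hc0 y)) hε.le)⟩
  constructor
  · rw [← lintegral_const_mul' _ _ ENNReal.ofReal_ne_top]
    exact lintegral_mono fun y => mul_le_mul_left (ENNReal.ofReal_le_ofReal (hk y).1) _
  · exact lintegral_mono fun y =>
      (mul_le_mul_left (ENNReal.ofReal_le_one.2 (hk y).2) _).trans_eq (one_mul _)

lemma scaling_factor_bounds_of_marginal [IsFiniteMeasure μ] [SFinite ν]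
    {c : X → Y → ℝ} (hc : Measurable (Function.uncurry c)) (hc0 : ∀ x y, 0 ≤ c x y)
    (hcmax : ∀ x y, c x y ≤ cmax) (hε : 0 < ε) {μh : Measure X} {u : X → ℝ} {v : Y → ℝ}
    (hu : Measurable u) (hv : Measurable v) (hu0 : ∀ x, 0 ≤ u x) (hv0 : ∀ y, 0 ≤ v y)
    (hmarg : μ.withDensity (fun x => ENNReal.ofReal (u x) *
      ∫⁻ y, ENNReal.ofReal (Real.exp (-c x y / ε)) * ENNReal.ofReal (v y) ∂ν) = μh)
    (hne : μh ≠ 0) (hbd : ∃ C : ℝ≥0∞, C ≠ ⊤ ∧ ∀ᵐ x ∂μ, μh.rnDeriv μ x ≤ C) :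
    0 < ∫ y, v y ∂ν ∧ (∃ C : ℝ, ∀ᵐ x ∂μ, u x ≤ C) ∧
    (∀ᵐ x ∂μ, (1 / ∫ y, v y ∂ν) * (μh.rnDeriv μ x).toReal ≤ u x ∧
      u x ≤ (Real.exp (cmax / ε) / ∫ y, v y ∂ν) * (μh.rnDeriv μ x).toReal) ∧
    Integrable (fun x => Real.log (u x)) μh := by
  obtain ⟨C, hC, hfC⟩ := hbd
  set I := fun x => ∫⁻ y, ENNReal.ofReal (Real.exp (-c x y / ε)) * ENNReal.ofReal (v y) ∂ν
  set J := ∫⁻ y, ENNReal.ofReal (v y) ∂ν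
  set g := fun x => ENNReal.ofReal (u x) * I x
  have hI (x : X) := lintegral_exp_neg_div_mul_mem (ν := ν) (hc0 x) (hcmax x) hε
    fun y => ENNReal.ofReal (v y)
  have hg : Measurable g := hu.ennreal_ofReal.mul (Measurable.lintegral_prod_right
    ((hc.neg.div_const ε).exp.ennreal_ofReal.mul (hv.comp measurable_snd).ennreal_ofReal))
  have hrn : μh.rnDeriv μ =ᵐ[μ] g := hmarg ▸ Measure.rnDeriv_withDensity μ hg
  have hgC : ∀ᵐ x ∂μ, g x ≤ C := by
    filter_upwards [hrn, hfC] with x hx hxC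
    rwa [← hx]
  obtain ⟨hJ0, hJtop⟩ := ne_zero_and_ne_top_of_withDensity_mul
    (ENNReal.ofReal_pos.2 (Real.exp_pos _)).ne' hI hC hgC (hmarg ▸ hne)
  have hJ : 0 < J.toReal := ENNReal.toReal_pos hJ0 hJtop
  have hsand : ∀ᵐ x ∂μ, 1 / J.toReal * (g x).toReal ≤ u x ∧
      u x ≤ Real.exp (cmax / ε) / J.toReal * (g x).toReal := by
    refine .of_forall fun x => ?_
    have hIJ : (I x).toReal ≤ J.toReal := ENNReal.toReal_mono hJtop (hI x).2
    have hJI : Real.exp (-cmax / ε) * J.toReal ≤ (I x).toReal := by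
      simpa [ENNReal.toReal_mul, Real.exp_nonneg] using
        ENNReal.toReal_mono ((hI x).2.trans_lt hJtop.lt_top).ne (hI x).1
    rw [show Real.exp (cmax / ε) = (Real.exp (-cmax / ε))⁻¹ by rw [neg_div, Real.exp_neg, inv_inv]]
    exact div_mul_le_and_le_inv_div_mul_of_eq_mul (hu0 x) hJ (Real.exp_pos _) hJI hIJ
      (by rw [ENNReal.toReal_mul, ENNReal.toReal_ofReal (hu0 x)])
  have hvJ : ∫ y, v y ∂ν = J.toReal :=
    integral_eq_lintegral_of_nonneg_ae (.of_forall hv0) hv.aestronglyMeasurable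
  rw [hvJ]
  refine ⟨hJ, ⟨Real.exp (cmax / ε) / J.toReal * C.toReal, ?_⟩, ?_, ?_⟩
  · filter_upwards [hsand, hgC] with x hx hxC
    exact hx.2.trans (by gcongr)
  · filter_upwards [hrn, hsand] with x hx hxs
    rwa [hx]
  · rw [← hmarg]
    exact integrable_log_withDensity hg hC hgC hu (by positivity) hsand

section

variable [SFinite ν] {c : X × Y → ℝ} {u : X → ℝ} {v : Y → ℝ}

lemma map_fst_withDensity_prod [SFinite μ] {F : X × Y → ℝ≥0∞} (hF : Measurable F) :
    ((μ.prod ν).withDensity F).map Prod.fst = μ.withDensity fun x => ∫⁻ y, F (x, y) ∂ν := by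
  ext s hs
  rw [Measure.map_apply measurable_fst hs, withDensity_apply _ (measurable_fst hs),
    withDensity_apply _ hs, ← Set.prod_univ, ← Measure.prod_restrict, Measure.restrict_univ,
    lintegral_prod _ hF.aemeasurable]

lemma map_snd_withDensity_prod [SFinite μ] {F : X × Y → ℝ≥0∞} (hF : Measurable F) :
    ((μ.prod ν).withDensity F).map Prod.snd = ν.withDensity fun y => ∫⁻ x, F (x, y) ∂μ := by
  ext s hs
  rw [Measure.map_apply measurable_snd hs, withDensity_apply _ (measurable_snd hs),
    withDensity_apply _ hs, ← Set.univ_prod, ← Measure.prod_restrict, Measure.restrict_univ,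
    lintegral_prod_symm _ hF.aemeasurable]

lemma Kmeas_withDensity_prodDensity (hc : Measurable c) (hu : Measurable u) (hv : Measurable v)
    (hu0 : ∀ x, 0 ≤ u x) :
    (Kmeas μ ν c ε).withDensity (prodDensity u v) = (μ.prod ν).withDensity fun p =>
      ENNReal.ofReal (Real.exp (-c p / ε)) * (ENNReal.ofReal (u p.1) * ENNReal.ofReal (v p.2)) := by
  have hprod : prodDensity u v = fun p : X × Y => ENNReal.ofReal (u p.1) * ENNReal.ofReal (v p.2) :=
    funext fun p => ENNReal.ofReal_mul (hu0 p.1)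
  rw [Kmeas, hprod]
  exact (withDensity_mul _ (hc.neg.div_const ε).exp.ennreal_ofReal
    ((hu.comp measurable_fst).ennreal_ofReal.mul (hv.comp measurable_snd).ennreal_ofReal)).symm

lemma measurable_gibbs_prodDensity (hc : Measurable c) (hu : Measurable u) (hv : Measurable v) :
    Measurable fun p : X × Y =>
      ENNReal.ofReal (Real.exp (-c p / ε)) * (ENNReal.ofReal (u p.1) * ENNReal.ofReal (v p.2)) :=
  (hc.neg.div_const ε).exp.ennreal_ofReal.mul
    ((hu.comp measurable_fst).ennreal_ofReal.mul (hv.comp measurable_snd).ennreal_ofReal)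

lemma map_fst_Kmeas_withDensity_prodDensity [SFinite μ] (hc : Measurable c) (hu : Measurable u)
    (hv : Measurable v) (hu0 : ∀ x, 0 ≤ u x) :
    ((Kmeas μ ν c ε).withDensity (prodDensity u v)).map Prod.fst = μ.withDensity fun x =>
      ENNReal.ofReal (u x) *
        ∫⁻ y, ENNReal.ofReal (Real.exp (-c (x, y) / ε)) * ENNReal.ofReal (v y) ∂ν := by
  rw [Kmeas_withDensity_prodDensity hc hu hv hu0,
    map_fst_withDensity_prod (measurable_gibbs_prodDensity hc hu hv)]
  congr with x
  rw [← lintegral_const_mul' _ _ ENNReal.ofReal_ne_top]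
  congr with y
  ring

lemma map_snd_Kmeas_withDensity_prodDensity [SFinite μ] (hc : Measurable c) (hu : Measurable u)
    (hv : Measurable v) (hu0 : ∀ x, 0 ≤ u x) :
    ((Kmeas μ ν c ε).withDensity (prodDensity u v)).map Prod.snd = ν.withDensity fun y =>
      ENNReal.ofReal (v y) *
        ∫⁻ x, ENNReal.ofReal (Real.exp (-c (x, y) / ε)) * ENNReal.ofReal (u x) ∂μ := by
  rw [Kmeas_withDensity_prodDensity hc hu hv hu0,
    map_snd_withDensity_prod (measurable_gibbs_prodDensity hc hu hv)]
  congr with y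
  rw [← lintegral_const_mul' _ _ ENNReal.ofReal_ne_top]
  congr with x
  ring

end

end

theorem scaling_factor_bounds_general
    {X Y : Type*} [MeasurableSpace X] [MeasurableSpace Y]
    (μ : Measure X) (ν : Measure Y) [IsProbabilityMeasure μ] [IsProbabilityMeasure ν]
    (c : X × Y → ℝ) (hc : Measurable c) (cmax : ℝ)
    (hc0 : ∀ p, 0 ≤ c p) (hcmax : ∀ p, c p ≤ cmax)
    (ε : ℝ) (hε : 0 < ε)
    (μh : Measure X) (νh : Measure Y)
    (hmass : μh Set.univ = νh Set.univ) (hposmass : 0 < μh Set.univ)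
    (hμbd : ∃ C : ℝ≥0∞, C ≠ ⊤ ∧ ∀ᵐ x ∂μ, μh.rnDeriv μ x ≤ C)
    (hνbd : ∃ C : ℝ≥0∞, C ≠ ⊤ ∧ ∀ᵐ y ∂ν, νh.rnDeriv ν y ≤ C)
    (πopt : Measure (X × Y)) (hπopt : πopt ∈ Coupling μh νh)
    (u : X → ℝ) (v : Y → ℝ) (hu : Measurable u) (hv : Measurable v)
    (hu0 : ∀ x, 0 ≤ u x) (hv0 : ∀ y, 0 ≤ v y)
    (hform : πopt = (Kmeas μ ν c ε).withDensity (prodDensity u v)) :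
    ((∃ C : ℝ, ∀ᵐ x ∂μ, u x ≤ C) ∧ (∃ C : ℝ, ∀ᵐ y ∂ν, v y ≤ C)) ∧
    (0 < ∫ x, u x ∂μ) ∧ (0 < ∫ y, v y ∂ν) ∧
    (∀ᵐ x ∂μ, (1 / ∫ y, v y ∂ν) * (μh.rnDeriv μ x).toReal ≤ u x ∧
      u x ≤ (Real.exp (cmax / ε) / ∫ y, v y ∂ν) * (μh.rnDeriv μ x).toReal) ∧
    (∀ᵐ y ∂ν, (1 / ∫ x, u x ∂μ) * (νh.rnDeriv ν y).toReal ≤ v y ∧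
      v y ≤ (Real.exp (cmax / ε) / ∫ x, u x ∂μ) * (νh.rnDeriv ν y).toReal) ∧
    Integrable (fun x => Real.log (u x)) μh ∧
    Integrable (fun y => Real.log (v y)) νh := by
  have hmargX := map_fst_Kmeas_withDensity_prodDensity (μ := μ) (ν := ν) (ε := ε) hc hu hv hu0
  have hmargY := map_snd_Kmeas_withDensity_prodDensity (μ := μ) (ν := ν) (ε := ε) hc hu hv hu0
  rw [← hform, hπopt.1] at hmargX
  rw [← hform, hπopt.2] at hmargY
  have hμh : μh ≠ 0 := fun h => by simp [h] at hposmass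
  have hνh : νh ≠ 0 := fun h => by simp [h, hmass] at hposmass
  obtain ⟨hv_pos, hu_bdd, hu_bounds, hlog_u⟩ :=
    scaling_factor_bounds_of_marginal (c := fun x y => c (x, y)) hc (fun _ _ => hc0 _)
      (fun _ _ => hcmax _) hε hu hv hu0 hv0 hmargX.symm hμh hμbd
  obtain ⟨hu_pos, hv_bdd, hv_bounds, hlog_v⟩ :=
    scaling_factor_bounds_of_marginal (c := fun y x => c (x, y)) (hc.comp measurable_swap)
      (fun _ _ => hc0 _) (fun _ _ => hcmax _) hε hv hu hv0 hu0 hmargY.symm hνh hνbd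
  exact ⟨⟨hu_bdd, hv_bdd⟩, hu_pos, hv_pos, hu_bounds, hv_bounds, hlog_u, hlog_v⟩

/-- Proposition 2.4 (iv): bounds on the scaling factors of the
unique minimizer: essential boundedness, positive `L¹` norms, pointwise a.e.
sandwich bounds, and integrability of the logarithms. -/
theorem scaling_factor_bounds
    {X Y : Type*} [MetricSpace X] [CompactSpace X] [MeasurableSpace X] [BorelSpace X]
    [MetricSpace Y] [CompactSpace Y] [MeasurableSpace Y] [BorelSpace Y]
    (μ : Measure X) (ν : Measure Y) [IsProbabilityMeasure μ] [IsProbabilityMeasure ν]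
    (c : X × Y → ℝ) (hc : Measurable c) (cmax : ℝ)
    (hc0 : ∀ p, 0 ≤ c p) (hcmax : ∀ p, c p ≤ cmax)
    (ε : ℝ) (hε : 0 < ε)
    (μh : Measure X) (νh : Measure Y)
    (hμac : μh ≪ μ) (hνac : νh ≪ ν)
    (hmass : μh Set.univ = νh Set.univ) (hposmass : 0 < μh Set.univ)
    (hμbd : ∃ C : ℝ≥0∞, C ≠ ⊤ ∧ ∀ᵐ x ∂μ, μh.rnDeriv μ x ≤ C)
    (hνbd : ∃ C : ℝ≥0∞, C ≠ ⊤ ∧ ∀ᵐ y ∂ν, νh.rnDeriv ν y ≤ C)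
    (πopt : Measure (X × Y)) (hπopt : πopt ∈ Coupling μh νh)
    (hmin : ∀ π ∈ Coupling μh νh, KL πopt (Kmeas μ ν c ε) ≤ KL π (Kmeas μ ν c ε))
    (u : X → ℝ) (v : Y → ℝ) (hu : Measurable u) (hv : Measurable v)
    (hu0 : ∀ x, 0 ≤ u x) (hv0 : ∀ y, 0 ≤ v y)
    (hform : πopt = (Kmeas μ ν c ε).withDensity (prodDensity u v)) :
    ((∃ C : ℝ, ∀ᵐ x ∂μ, u x ≤ C) ∧ (∃ C : ℝ, ∀ᵐ y ∂ν, v y ≤ C)) ∧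
    (0 < ∫ x, u x ∂μ) ∧ (0 < ∫ y, v y ∂ν) ∧
    (∀ᵐ x ∂μ, (1 / ∫ y, v y ∂ν) * (μh.rnDeriv μ x).toReal ≤ u x ∧
      u x ≤ (Real.exp (cmax / ε) / ∫ y, v y ∂ν) * (μh.rnDeriv μ x).toReal) ∧
    (∀ᵐ y ∂ν, (1 / ∫ x, u x ∂μ) * (νh.rnDeriv ν y).toReal ≤ v y ∧
      v y ≤ (Real.exp (cmax / ε) / ∫ x, u x ∂μ) * (νh.rnDeriv ν y).toReal) ∧
    Integrable (fun x => Real.log (u x)) μh ∧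
    Integrable (fun y => Real.log (v y)) νh :=
  scaling_factor_bounds_general μ ν c hc cmax hc0 hcmax ε hε μh νh hmass hposmass hμbd hνbd πopt
    hπopt u v hu hv hu0 hv0 hform
end
end

section
/- Let π* = (u*⊗v*)·K ∈ Π(μ,ν) with u* ∈ L^∞₊(X,μ), v* ∈ L^∞₊(Y,ν) (so that π* is the unique minimizer of KL(·|K) over Π(μ,ν)). Let {X_i}_{i∈I} be a finite measurable partition of X, K_i := K restricted to X_i×Y, and let π := Σ_{i∈I} (u_i⊗v_i)·K_i ∈ Π(μ,ν) with u_i ∈ L^∞₊(X,μ), v_i ∈ L^∞₊(Y,ν). Then KL(π|K) − KL(π*|K) = KL(π|π*). -/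
open MeasureTheory ENNReal Filter Topology

noncomputable section

/-!
Let `b = u* ⊗ v*` be the density of `π*` with respect to `K`. The chain rule for Radon–Nikodym
derivatives gives `log (dπ/dK) = log (dπ/dπ*) + log b` `π`-a.e., so, `π` and `π*` having the same
mass, `KL(π|K) - KL(π|π*)` and `KL(π*|K)` differ by `∫ log b dπ - ∫ log b dπ*`. This vanishes:
`log b (x, y) = log u*(x) + log v*(y)` is a sum of functions of one variable, so its integral is
the same against every coupling of `μ` and `ν`. The boundedness of `u*, v*` makes `log u*` and
`log v*` integrable: `∫ |log u*| dμ = ∫ b |log u*| dK` and `s |log s|` is bounded on bounded sets.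
-/
open InformationTheory

section Coupling

variable {X Y : Type*} [MeasurableSpace X] [MeasurableSpace Y] {μ : Measure X} {ν : Measure Y}
  {π : Measure (X × Y)}

lemma measure_univ_of_mem_coupling (hπ : π ∈ Coupling μ ν) : π Set.univ = μ Set.univ := by
  rw [← hπ.1, Measure.map_apply measurable_fst MeasurableSet.univ, Set.preimage_univ]

lemma isFiniteMeasure_of_mem_coupling [IsFiniteMeasure μ] (hπ : π ∈ Coupling μ ν) :
    IsFiniteMeasure π :=
  ⟨by rw [measure_univ_of_mem_coupling hπ]; exact measure_lt_top _ _⟩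

lemma ae_of_ae_comp_fst_of_mem_coupling (hπ : π ∈ Coupling μ ν) {P : X → Prop}
    (hP : MeasurableSet {x | P x}) (h : ∀ᵐ p ∂π, P p.1) : ∀ᵐ x ∂μ, P x := by
  rw [← hπ.1]
  exact (ae_map_iff measurable_fst.aemeasurable hP).2 h

lemma ae_of_ae_comp_snd_of_mem_coupling (hπ : π ∈ Coupling μ ν) {P : Y → Prop}
    (hP : MeasurableSet {y | P y}) (h : ∀ᵐ p ∂π, P p.2) : ∀ᵐ y ∂ν, P y := by
  rw [← hπ.2]
  exact (ae_map_iff measurable_snd.aemeasurable hP).2 h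

lemma integrable_comp_fst_iff_of_mem_coupling (hπ : π ∈ Coupling μ ν) {f : X → ℝ}
    (hf : AEStronglyMeasurable f μ) : Integrable (fun p => f p.1) π ↔ Integrable f μ := by
  rw [← hπ.1] at hf ⊢
  exact (integrable_map_measure hf measurable_fst.aemeasurable).symm

lemma integrable_comp_snd_iff_of_mem_coupling (hπ : π ∈ Coupling μ ν) {g : Y → ℝ}
    (hg : AEStronglyMeasurable g ν) : Integrable (fun p => g p.2) π ↔ Integrable g ν := by
  rw [← hπ.2] at hg ⊢
  exact (integrable_map_measure hg measurable_snd.aemeasurable).symm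

lemma integrable_add_of_mem_coupling (hπ : π ∈ Coupling μ ν) {f : X → ℝ} {g : Y → ℝ}
    (hf : Integrable f μ) (hg : Integrable g ν) : Integrable (fun p => f p.1 + g p.2) π :=
  ((integrable_comp_fst_iff_of_mem_coupling hπ hf.1).2 hf).add
    ((integrable_comp_snd_iff_of_mem_coupling hπ hg.1).2 hg)

lemma integral_add_of_mem_coupling (hπ : π ∈ Coupling μ ν) {f : X → ℝ} {g : Y → ℝ}
    (hf : Integrable f μ) (hg : Integrable g ν) :
    ∫ p, f p.1 + g p.2 ∂π = ∫ x, f x ∂μ + ∫ y, g y ∂ν := by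
  rw [integral_add ((integrable_comp_fst_iff_of_mem_coupling hπ hf.1).2 hf)
    ((integrable_comp_snd_iff_of_mem_coupling hπ hg.1).2 hg)]
  rw [← hπ.1] at hf
  rw [← hπ.2] at hg
  rw [← integral_map measurable_fst.aemeasurable hf.1,
    ← integral_map measurable_snd.aemeasurable hg.1, hπ.1, hπ.2]

end Coupling

lemma phi_eq_klFun : phi = klFun := by
  funext s
  rw [phi, klFun]
  ring

lemma KL_eq_klDiv {Z : Type*} [MeasurableSpace Z] (ρ σ : Measure Z) [IsFiniteMeasure ρ]
    [IsFiniteMeasure σ] : KL ρ σ = klDiv ρ σ := by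
  rw [KL, klDiv_eq_lintegral_klFun, phi_eq_klFun]

section Pythagoras

variable {Z : Type*} [MeasurableSpace Z] {ρ ρ' σ : Measure Z}

lemma llr_ae_eq_llr_add_llr [SigmaFinite ρ] [SigmaFinite ρ'] [SigmaFinite σ] (hρρ' : ρ ≪ ρ')
    (hρ'σ : ρ' ≪ σ) : llr ρ σ =ᵐ[ρ] llr ρ ρ' + llr ρ' σ := by
  have hρσ := hρρ'.trans hρ'σ
  filter_upwards [hρσ.ae_le (Measure.rnDeriv_mul_rnDeriv hρρ' (κ := σ)),
    Measure.rnDeriv_pos hρρ', hρρ'.ae_le (Measure.rnDeriv_pos hρ'σ),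
    hρρ'.ae_le (Measure.rnDeriv_lt_top ρ ρ'), hρσ.ae_le (Measure.rnDeriv_lt_top ρ' σ)]
    with z hmul hpos hpos' hlt hlt'
  rw [Pi.add_apply, llr, llr, llr, ← hmul, Pi.mul_apply, ENNReal.toReal_mul,
    Real.log_mul (ENNReal.toReal_pos hpos.ne' hlt.ne).ne'
      (ENNReal.toReal_pos hpos'.ne' hlt'.ne).ne']

theorem klDiv_eq_klDiv_add_klDiv_of_integral_llr_eq [IsFiniteMeasure ρ] [IsFiniteMeasure ρ']
    [IsFiniteMeasure σ] (hρρ' : ρ ≪ ρ') (hρ'σ : ρ' ≪ σ) (h_univ : ρ Set.univ = ρ' Set.univ)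
    (h_int : Integrable (llr ρ' σ) ρ) (h_int' : Integrable (llr ρ' σ) ρ')
    (h_eq : ∫ z, llr ρ' σ z ∂ρ = ∫ z, llr ρ' σ z ∂ρ') :
    klDiv ρ σ = klDiv ρ ρ' + klDiv ρ' σ := by
  have hadd := llr_ae_eq_llr_add_llr hρρ' hρ'σ
  by_cases hint : Integrable (llr ρ ρ') ρ
  · have hint₀ : Integrable (llr ρ σ) ρ := (hint.add h_int).congr hadd.symm
    have h_real : ρ.real Set.univ = ρ'.real Set.univ := by rw [measureReal_def, h_univ]; rfl
    rw [klDiv_of_ac_of_integrable (hρρ'.trans hρ'σ) hint₀, klDiv_of_ac_of_integrable hρρ' hint,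
      klDiv_of_ac_of_integrable hρ'σ h_int', ← ENNReal.ofReal_add
        (integral_llr_add_sub_measure_univ_nonneg hρρ' hint)
        (integral_llr_add_sub_measure_univ_nonneg hρ'σ h_int'),
      integral_congr_ae hadd, Pi.add_def, integral_add hint h_int, h_eq, h_real]
    congr 1
    ring
  · have hint₀ : ¬ Integrable (llr ρ σ) ρ := fun h =>
      hint ((h.sub h_int).congr (by filter_upwards [hadd] with z hz; simp [hz]))
    rw [klDiv_of_not_integrable hint, klDiv_of_not_integrable hint₀, top_add]

end Pythagoras

lemma abs_mul_log_le_sq_add_one {s : ℝ} (hs : 0 ≤ s) : |s * Real.log s| ≤ s ^ 2 + 1 := by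
  have hlow := Real.self_sub_one_le_mul_log hs
  have hup : s * Real.log s ≤ s * (s - 1) := by
    rcases hs.eq_or_lt with rfl | hpos
    · simp
    · exact mul_le_mul_of_nonneg_left (Real.log_le_sub_one_of_pos hpos) hs
  rw [abs_le]
  constructor <;> nlinarith

section WithDensity

variable {Z : Type*} [MeasurableSpace Z] {σ : Measure Z}

lemma integrable_log_withDensity_ofReal_mul [IsFiniteMeasure σ] {f g : Z → ℝ}
    (hf : Measurable f) (hg : Measurable g) {Cf Cg : ℝ} (hf0 : ∀ᵐ z ∂σ, 0 ≤ f z)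
    (hfC : ∀ᵐ z ∂σ, f z ≤ Cf) (hg0 : ∀ᵐ z ∂σ, 0 ≤ g z) (hgC : ∀ᵐ z ∂σ, g z ≤ Cg) :
    Integrable (fun z => Real.log (f z)) (σ.withDensity fun z => ENNReal.ofReal (f z * g z)) := by
  rw [integrable_withDensity_iff (f := fun z => ENNReal.ofReal (f z * g z))
    (hf.mul hg).ennreal_ofReal (ae_of_all _ fun _ => ENNReal.ofReal_lt_top)]
  refine Integrable.mono' (integrable_const ((Cf ^ 2 + 1) * Cg))
    (hf.log.mul (hf.mul hg).ennreal_ofReal.ennreal_toReal).aestronglyMeasurable ?_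
  filter_upwards [hf0, hfC, hg0, hgC] with z hf0 hfC hg0 hgC
  rw [ENNReal.toReal_ofReal (mul_nonneg hf0 hg0), Real.norm_eq_abs,
    show Real.log (f z) * (f z * g z) = f z * Real.log (f z) * g z by ring, abs_mul,
    abs_of_nonneg hg0]
  calc |f z * Real.log (f z)| * g z ≤ (f z ^ 2 + 1) * g z :=
        mul_le_mul_of_nonneg_right (abs_mul_log_le_sq_add_one hf0) hg0
    _ ≤ (Cf ^ 2 + 1) * Cg := by gcongr

lemma sum_withDensity_restrict_absolutelyContinuous {ι : Type*} [Fintype ι] (s : ι → Set Z)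
    (f : ι → Z → ℝ≥0∞) : ∑ i, (σ.restrict (s i)).withDensity (f i) ≪ σ := by
  rw [← Measure.sum_fintype]
  exact Measure.absolutelyContinuous_sum_left fun i =>
    (withDensity_absolutelyContinuous _ _).trans Measure.restrict_le_self.absolutelyContinuous

end WithDensity

section ProdDensity

variable {X Y : Type*} [MeasurableSpace X] [MeasurableSpace Y] {μ : Measure X} {ν : Measure Y}
  {u : X → ℝ} {v : Y → ℝ}

lemma measurable_prodDensity (hu : Measurable u) (hv : Measurable v) :
    Measurable (prodDensity u v) :=
  ((hu.comp measurable_fst).mul (hv.comp measurable_snd)).ennreal_ofReal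

lemma ae_ne_zero_withDensity_prodDensity (σ : Measure (X × Y)) (hu : Measurable u)
    (hv : Measurable v) : ∀ᵐ p ∂σ.withDensity (prodDensity u v), u p.1 ≠ 0 ∧ v p.2 ≠ 0 := by
  rw [ae_withDensity_iff (measurable_prodDensity hu hv)]
  refine ae_of_all _ fun p hp => mul_ne_zero_iff.1 fun h0 => hp ?_
  simp [prodDensity, h0]

lemma llr_withDensity_prodDensity_ae_eq (σ : Measure (X × Y)) [SigmaFinite σ]
    (hu : Measurable u) (hv : Measurable v) (hu_pos : ∀ᵐ p ∂σ, 0 < u p.1)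
    (hv_pos : ∀ᵐ p ∂σ, 0 < v p.2) :
    llr (σ.withDensity (prodDensity u v)) σ =ᵐ[σ]
      fun p => Real.log (u p.1) + Real.log (v p.2) := by
  filter_upwards [Measure.rnDeriv_withDensity σ (measurable_prodDensity hu hv), hu_pos, hv_pos]
    with p hp hup hvp
  rw [llr, hp, prodDensity, ENNReal.toReal_ofReal (mul_pos hup hvp).le,
    Real.log_mul hup.ne' hvp.ne']

lemma ae_comp_fst_of_absolutelyContinuous_prod [SFinite ν] {σ : Measure (X × Y)}
    (hσ : σ ≪ μ.prod ν) {P : X → Prop} (h : ∀ᵐ x ∂μ, P x) : ∀ᵐ p ∂σ, P p.1 :=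
  hσ.ae_le (Measure.quasiMeasurePreserving_fst.ae h)

lemma ae_comp_snd_of_absolutelyContinuous_prod [SFinite ν] {σ : Measure (X × Y)}
    (hσ : σ ≪ μ.prod ν) {P : Y → Prop} (h : ∀ᵐ y ∂ν, P y) : ∀ᵐ p ∂σ, P p.2 :=
  hσ.ae_le (Measure.quasiMeasurePreserving_snd.ae h)

lemma Kmeas_le_prod [SFinite ν] {c : X × Y → ℝ} (hc0 : ∀ p, 0 ≤ c p) {ε : ℝ} (hε : 0 ≤ ε) :
    Kmeas μ ν c ε ≤ μ.prod ν := by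
  refine (withDensity_mono (ae_of_all _ fun p => ?_)).trans_eq withDensity_one
  rw [Pi.one_apply, ENNReal.ofReal_le_one, Real.exp_le_one_iff]
  exact div_nonpos_of_nonpos_of_nonneg (neg_nonpos.2 (hc0 p)) hε

end ProdDensity

section ScaledPlan

variable {X Y : Type*} [MeasurableSpace X] [MeasurableSpace Y] {μ : Measure X} {ν : Measure Y}
  {u : X → ℝ} {v : Y → ℝ} {σ : Measure (X × Y)}

lemma pos_of_withDensity_prodDensity_mem_coupling (hu : Measurable u) (hu0 : ∀ᵐ x ∂μ, 0 ≤ u x)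
    (hv : Measurable v) (hv0 : ∀ᵐ y ∂ν, 0 ≤ v y)
    (h : σ.withDensity (prodDensity u v) ∈ Coupling μ ν) :
    (∀ᵐ x ∂μ, 0 < u x) ∧ ∀ᵐ y ∂ν, 0 < v y := by
  have hne := ae_ne_zero_withDensity_prodDensity σ hu hv
  constructor
  · filter_upwards [hu0, ae_of_ae_comp_fst_of_mem_coupling h
      (measurableSet_eq_fun hu measurable_const).compl (hne.mono fun _ hp => hp.1)]
      with x h0 hx using h0.lt_of_ne' hx
  · filter_upwards [hv0, ae_of_ae_comp_snd_of_mem_coupling h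
      (measurableSet_eq_fun hv measurable_const).compl (hne.mono fun _ hp => hp.2)]
      with y h0 hy using h0.lt_of_ne' hy

lemma integrable_log_of_withDensity_prodDensity_mem_coupling [SFinite ν] [IsFiniteMeasure σ]
    (hσ : σ ≪ μ.prod ν) (hu : LinftyPlus μ u) (hv : LinftyPlus ν v)
    (h : σ.withDensity (prodDensity u v) ∈ Coupling μ ν) :
    Integrable (fun x => Real.log (u x)) μ ∧ Integrable (fun y => Real.log (v y)) ν := by
  obtain ⟨hum, hu0, Cu, huC⟩ := hu
  obtain ⟨hvm, hv0, Cv, hvC⟩ := hv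
  have hu0' := ae_comp_fst_of_absolutelyContinuous_prod hσ hu0
  have huC' := ae_comp_fst_of_absolutelyContinuous_prod hσ huC
  have hv0' := ae_comp_snd_of_absolutelyContinuous_prod hσ hv0
  have hvC' := ae_comp_snd_of_absolutelyContinuous_prod hσ hvC
  constructor
  · rw [← integrable_comp_fst_iff_of_mem_coupling h hum.log.aestronglyMeasurable]
    exact integrable_log_withDensity_ofReal_mul (f := fun p : X × Y => u p.1)
      (g := fun p => v p.2) (hum.comp measurable_fst) (hvm.comp measurable_snd) hu0' huC' hv0' hvC'
  · rw [← integrable_comp_snd_iff_of_mem_coupling h hvm.log.aestronglyMeasurable,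
      show prodDensity u v = fun p => ENNReal.ofReal (v p.2 * u p.1) from
        funext fun p => by rw [prodDensity, mul_comm]]
    exact integrable_log_withDensity_ofReal_mul (f := fun p : X × Y => v p.2)
      (g := fun p => u p.1) (hvm.comp measurable_snd) (hum.comp measurable_fst) hv0' hvC' hu0' huC'

lemma absolutelyContinuous_withDensity_prodDensity (hu : Measurable u) (hv : Measurable v)
    (hu_pos : ∀ᵐ p ∂σ, 0 < u p.1) (hv_pos : ∀ᵐ p ∂σ, 0 < v p.2) :
    σ ≪ σ.withDensity (prodDensity u v) := by
  refine withDensity_absolutelyContinuous' (measurable_prodDensity hu hv).aemeasurable ?_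
  filter_upwards [hu_pos, hv_pos] with p hup hvp
  simpa [prodDensity] using mul_pos hup hvp

theorem KL_eq_KL_add_KL_of_mem_coupling [IsFiniteMeasure μ] [SFinite ν]
    [IsFiniteMeasure σ] (hσ : σ ≪ μ.prod ν) (hu : LinftyPlus μ u) (hv : LinftyPlus ν v)
    (hopt : σ.withDensity (prodDensity u v) ∈ Coupling μ ν) {ρ : Measure (X × Y)}
    (hρ : ρ ∈ Coupling μ ν) (hρσ : ρ ≪ σ) :
    KL ρ σ = KL ρ (σ.withDensity (prodDensity u v)) + KL (σ.withDensity (prodDensity u v)) σ := by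
  have := isFiniteMeasure_of_mem_coupling hρ
  have := isFiniteMeasure_of_mem_coupling hopt
  obtain ⟨hu_pos, hv_pos⟩ :=
    pos_of_withDensity_prodDensity_mem_coupling hu.1 hu.2.1 hv.1 hv.2.1 hopt
  have hu_pos' := ae_comp_fst_of_absolutelyContinuous_prod hσ hu_pos
  have hv_pos' := ae_comp_snd_of_absolutelyContinuous_prod hσ hv_pos
  obtain ⟨hlog_u, hlog_v⟩ := integrable_log_of_withDensity_prodDensity_mem_coupling hσ hu hv hopt
  have hllr := llr_withDensity_prodDensity_ae_eq σ hu.1 hv.1 hu_pos' hv_pos'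
  have hoptσ : σ.withDensity (prodDensity u v) ≪ σ := withDensity_absolutelyContinuous _ _
  have hllrρ : _ =ᵐ[ρ] _ := hρσ.ae_le hllr
  have hllr' : _ =ᵐ[σ.withDensity (prodDensity u v)] _ := hoptσ.ae_le hllr
  rw [KL_eq_klDiv, KL_eq_klDiv, KL_eq_klDiv]
  refine klDiv_eq_klDiv_add_klDiv_of_integral_llr_eq
    (hρσ.trans (absolutelyContinuous_withDensity_prodDensity hu.1 hv.1 hu_pos' hv_pos')) hoptσ
    ?_ ((integrable_add_of_mem_coupling hρ hlog_u hlog_v).congr hllrρ.symm)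
    ((integrable_add_of_mem_coupling hopt hlog_u hlog_v).congr hllr'.symm) ?_
  · rw [measure_univ_of_mem_coupling hρ, measure_univ_of_mem_coupling hopt]
  · rw [integral_congr_ae hllrρ, integral_congr_ae hllr',
      integral_add_of_mem_coupling hρ hlog_u hlog_v,
      integral_add_of_mem_coupling hopt hlog_u hlog_v]

end ScaledPlan

theorem suboptimality_eq_kl_general
    {X Y : Type*} [MeasurableSpace X] [MeasurableSpace Y]
    (μ : Measure X) (ν : Measure Y) [IsProbabilityMeasure μ] [IsProbabilityMeasure ν]
    (c : X × Y → ℝ)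
    (hc0 : ∀ p, 0 ≤ c p)
    (ε : ℝ) (hε : 0 < ε)
    (us : X → ℝ) (vs : Y → ℝ) (hus : LinftyPlus μ us) (hvs : LinftyPlus ν vs)
    (πopt : Measure (X × Y))
    (hπoptdef : πopt = (Kmeas μ ν c ε).withDensity (prodDensity us vs))
    (hπopt : πopt ∈ Coupling μ ν)
    {ι : Type*} [Fintype ι]
    (Xc : ι → Set X)
    (u : ι → X → ℝ) (v : ι → Y → ℝ)
    (π : Measure (X × Y))
    (hπ : π = ∑ i,
      ((Kmeas μ ν c ε).restrict (Xc i ×ˢ Set.univ)).withDensity (prodDensity (u i) (v i)))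
    (hπfeas : π ∈ Coupling μ ν) :
    KL π (Kmeas μ ν c ε) = KL π πopt + KL πopt (Kmeas μ ν c ε) := by
  have : IsFiniteMeasure (Kmeas μ ν c ε) := isFiniteMeasure_of_le _ (Kmeas_le_prod hc0 hε.le)
  subst hπoptdef
  exact KL_eq_KL_add_KL_of_mem_coupling (σ := Kmeas μ ν c ε)
    (withDensity_absolutelyContinuous _ _) hus hvs hπopt hπfeas
    (hπ ▸ sum_withDensity_restrict_absolutelyContinuous _ _)

/-- Lemma 3.4, second part: for a feasible plan `π` built from
scaled kernels over a partition, the suboptimality equals a `KL` divergence: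
`KL(π|K) − KL(π*|K) = KL(π|π*)`, stated additively as
`KL(π|K) = KL(π|π*) + KL(π*|K)`. -/
theorem suboptimality_eq_kl
    {X Y : Type*} [MetricSpace X] [CompactSpace X] [MeasurableSpace X] [BorelSpace X]
    [MetricSpace Y] [CompactSpace Y] [MeasurableSpace Y] [BorelSpace Y]
    (μ : Measure X) (ν : Measure Y) [IsProbabilityMeasure μ] [IsProbabilityMeasure ν]
    (c : X × Y → ℝ) (hc : Measurable c) (cmax : ℝ)
    (hc0 : ∀ p, 0 ≤ c p) (hcmax : ∀ p, c p ≤ cmax)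
    (ε : ℝ) (hε : 0 < ε)
    (us : X → ℝ) (vs : Y → ℝ) (hus : LinftyPlus μ us) (hvs : LinftyPlus ν vs)
    (πopt : Measure (X × Y))
    (hπoptdef : πopt = (Kmeas μ ν c ε).withDensity (prodDensity us vs))
    (hπopt : πopt ∈ Coupling μ ν)
    {ι : Type*} [Fintype ι]
    (Xc : ι → Set X) (hXm : ∀ i, MeasurableSet (Xc i))
    (hXd : ∀ i j, i ≠ j → Disjoint (Xc i) (Xc j)) (hXu : (⋃ i, Xc i) = Set.univ)
    (u : ι → X → ℝ) (v : ι → Y → ℝ)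
    (hu : ∀ i, LinftyPlus μ (u i)) (hv : ∀ i, LinftyPlus ν (v i))
    (π : Measure (X × Y))
    (hπ : π = ∑ i,
      ((Kmeas μ ν c ε).restrict (Xc i ×ˢ Set.univ)).withDensity (prodDensity (u i) (v i)))
    (hπfeas : π ∈ Coupling μ ν) :
    KL π (Kmeas μ ν c ε) = KL π πopt + KL πopt (Kmeas μ ν c ε) :=
  suboptimality_eq_kl_general μ ν c hc0 ε hε us vs hus hvs πopt hπoptdef hπopt Xc u v π hπ hπfeas
end
end
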